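/- arXiv:2502.13375 — 2 statements merged into one kernel-verified Lean document; each statement's English description precedes it below -/
import Mathlib

section
/- Let G be a finite simple graph with minimum degree δ, let t ≥ 2, and let c : V → Fin t be a coloring in which every color class has size at least k. If c is an equilibrium under the difference-seeking utility U_#, then the social welfare satisfies 2·sw(c, U_#) ≥ t·k·δ. -/
open SimpleGraph Finset

/-- The coloring obtained from `c` by swapping the colors (agents) at `u` and `v`. -/
def swapColoring {V : Type*} [DecidableEq V] {t : ℕ} (c : V → Fin t) (u v : V) : V → Fin t :=
  fun w => if w = u then c v else if w = v then c u else c w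

/-- The binary utility `U_b`: 1 if some neighbor has a different type, 0 otherwise. -/
def Ub {V : Type*} [Fintype V] (G : SimpleGraph V) [DecidableRel G.Adj]
    {t : ℕ} (c : V → Fin t) (v : V) : ℕ :=
  if ∃ w ∈ G.neighborFinset v, c w ≠ c v then 1 else 0

/-- The difference-seeking utility `U_#`: the number of neighbors of a different type. -/
def Usharp {V : Type*} [Fintype V] (G : SimpleGraph V) [DecidableRel G.Adj]
    {t : ℕ} (c : V → Fin t) (v : V) : ℕ :=
  ((G.neighborFinset v).filter fun w => c w ≠ c v).card

/-- `T_c(v)`: the set of types present in the neighborhood of `v`. -/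
def typesIn {V : Type*} [Fintype V] (G : SimpleGraph V) [DecidableRel G.Adj]
    {t : ℕ} (c : V → Fin t) (v : V) : Finset (Fin t) :=
  (G.neighborFinset v).image c

/-- The variety-seeking utility `U_τ`: the number of types other than `c v` in the
neighborhood of `v`. -/
def Utau {V : Type*} [Fintype V] (G : SimpleGraph V) [DecidableRel G.Adj]
    {t : ℕ} (c : V → Fin t) (v : V) : ℕ :=
  ((typesIn G c v).erase (c v)).card

/-- The swap of `u` and `v` is improving under utility `U`. -/
def ImprovingSwap {V : Type*} [DecidableEq V] {t : ℕ}
    (U : (V → Fin t) → V → ℕ) (c : V → Fin t) (u v : V) : Prop :=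
  U c u < U (swapColoring c u v) v ∧ U c v < U (swapColoring c u v) u

/-- `c` is an equilibrium under the utility `U`: no improving swap exists. -/
def Equilibrium {V : Type*} [DecidableEq V] {t : ℕ}
    (U : (V → Fin t) → V → ℕ) (c : V → Fin t) : Prop :=
  ∀ u v : V, c u ≠ c v → ¬ ImprovingSwap U c u v

/-- The number of monochromatic edges of `c`. -/
def monoCount {V : Type*} [Fintype V] [DecidableEq V] (G : SimpleGraph V) [DecidableRel G.Adj]
    {t : ℕ} (c : V → Fin t) : ℕ :=
  (G.edgeFinset.filter fun e => (e.map c).IsDiag).card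

/-- The number of colorful edges of `c`. -/
def ceCount {V : Type*} [Fintype V] [DecidableEq V] (G : SimpleGraph V) [DecidableRel G.Adj]
    {t : ℕ} (c : V → Fin t) : ℕ :=
  (G.edgeFinset.filter fun e => ¬ (e.map c).IsDiag).card

/-- The cycle graph on `ZMod n`: `i` adjacent to `i + 1` and `i - 1`. -/
def cycleZMod (n : ℕ) : SimpleGraph (ZMod n) := SimpleGraph.circulantGraph {1}

instance (n : ℕ) : DecidableRel (cycleZMod n).Adj := fun a b =>
  decidable_of_iff (a ≠ b ∧ (a - b = 1 ∨ b - a = 1)) (by simp [cycleZMod])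

instance {α β : Type*} (G : SimpleGraph α) (H : SimpleGraph β)
    [DecidableRel G.Adj] [DecidableRel H.Adj] [DecidableEq α] [DecidableEq β] :
    DecidableRel (G □ H).Adj := fun x y =>
  decidable_of_iff (G.Adj x.1 y.1 ∧ x.2 = y.2 ∨ H.Adj x.2 y.2 ∧ x.1 = y.1)
    (SimpleGraph.boxProd_adj).symm

/-!
After swapping `u` and `v` of different types, `v` gains every neighbor of its old type as a
differently typed neighbor, so `deg v ≤ U_#(c, v) + U_#(c', v)`. As the swap is not improving, this
gives `δ ≤ U_#(c, u) + U_#(c, v)` whenever `c u ≠ c v`. Pick in each type class a vertex of least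
utility; pairing each class with the next one cyclically shows that twice the sum of these minima
is at least `t δ`, and each class contributes at least `k` times its minimum to the welfare.
-/

lemma swapColoring_comm {V : Type*} [DecidableEq V] {t : ℕ} (c : V → Fin t) (u v : V) :
    swapColoring c u v = swapColoring c v u := by
  funext w
  unfold swapColoring
  split_ifs <;> simp_all

lemma degree_le_Usharp_add_Usharp_swapColoring {V : Type*} [Fintype V] [DecidableEq V]
    (G : SimpleGraph V) [DecidableRel G.Adj] {t : ℕ} (c : V → Fin t) {u v : V}
    (h : c u ≠ c v) :
    G.degree v ≤ Usharp G c v + Usharp G (swapColoring c u v) v := by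
  have hvu : v ≠ u := fun e => h (by rw [e])
  have hsub : (G.neighborFinset v).filter (fun w => ¬ c w ≠ c v)
      ⊆ (G.neighborFinset v).filter
        (fun w => swapColoring c u v w ≠ swapColoring c u v v) := by
    intro w hw
    rw [mem_filter, not_not] at hw
    have hwv : w ≠ v := (G.ne_of_adj ((G.mem_neighborFinset v w).1 hw.1)).symm
    have hwu : w ≠ u := by rintro rfl; exact h hw.2
    simp only [mem_filter, swapColoring, if_neg hwu, if_neg hwv, if_neg hvu]
    exact ⟨hw.1, hw.2 ▸ h.symm⟩
  rw [← G.card_neighborFinset_eq_degree,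
    ← card_filter_add_card_filter_not (s := G.neighborFinset v) (p := fun w => c w ≠ c v)]
  exact Nat.add_le_add_left (card_le_card hsub) _

lemma minDegree_le_Usharp_add_Usharp_of_equilibrium {V : Type*} [Fintype V] [DecidableEq V]
    (G : SimpleGraph V) [DecidableRel G.Adj] {t : ℕ} {c : V → Fin t}
    (heq : Equilibrium (Usharp G) c) {u v : V} (h : c u ≠ c v) :
    G.minDegree ≤ Usharp G c u + Usharp G c v := by
  have : Nonempty V := ⟨u⟩
  have hv := degree_le_Usharp_add_Usharp_swapColoring G c h
  have hu := degree_le_Usharp_add_Usharp_swapColoring G c h.symm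
  rw [← swapColoring_comm] at hu
  have hnot := heq u v h
  simp only [ImprovingSwap, not_and_or, not_lt] at hnot
  have := G.minDegree_le_degree u
  have := G.minDegree_le_degree v
  omega

lemma mul_le_two_mul_sum_of_le_add {t δ : ℕ} (ht : 2 ≤ t) (f : Fin t → ℕ)
    (hpair : ∀ i j, i ≠ j → δ ≤ f i + f j) :
    t * δ ≤ 2 * ∑ i, f i := by
  have hrot : ∀ i, finRotate t i ≠ i := fun i =>
    Equiv.Perm.mem_support.1 (by simp [support_finRotate_of_le ht])
  calc t * δ = ∑ _i : Fin t, δ := by simp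
    _ ≤ ∑ i, (f i + f (finRotate t i)) :=
        sum_le_sum fun i _ => hpair i _ (hrot i).symm
    _ = 2 * ∑ i, f i := by
        rw [sum_add_distrib, Equiv.sum_comp (finRotate t) f, two_mul]

lemma exists_fiber_rep_mul_sum_le_sum {V ι : Type*} [Fintype V] [Fintype ι] [DecidableEq ι]
    {k : ℕ} (hk : 0 < k) (c : V → ι) (f : V → ℕ)
    (hsize : ∀ i, k ≤ (univ.filter fun v => c v = i).card) :
    ∃ w : ι → V, (∀ i, c (w i) = i) ∧ k * ∑ i, f (w i) ≤ ∑ v, f v := by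
  have hmin : ∀ i, ∃ w ∈ univ.filter fun v => c v = i,
      ∀ v ∈ univ.filter fun v => c v = i, f w ≤ f v := fun i =>
    exists_min_image _ f (card_pos.1 (hk.trans_le (hsize i)))
  choose w hw hwmin using hmin
  refine ⟨w, fun i => (mem_filter.1 (hw i)).2, ?_⟩
  rw [← sum_fiberwise univ c f, mul_sum]
  refine sum_le_sum fun i _ => ?_
  calc k * f (w i) ≤ (univ.filter fun v => c v = i).card * f (w i) :=
        Nat.mul_le_mul_right _ (hsize i)
    _ ≤ _ := by simpa using card_nsmul_le_sum _ f _ (hwmin i)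

lemma mul_mul_le_two_mul_sum_of_le_add {V : Type*} [Fintype V] {t k δ : ℕ} (ht : 2 ≤ t)
    (c : V → Fin t) (f : V → ℕ)
    (hsize : ∀ i, k ≤ (univ.filter fun v => c v = i).card)
    (hpair : ∀ u v, c u ≠ c v → δ ≤ f u + f v) :
    t * k * δ ≤ 2 * ∑ v, f v := by
  rcases Nat.eq_zero_or_pos k with rfl | hk
  · simp
  obtain ⟨w, hcw, hw⟩ := exists_fiber_rep_mul_sum_le_sum hk c f hsize
  have hclass := mul_le_two_mul_sum_of_le_add ht (f ∘ w) fun i j hij =>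
    hpair (w i) (w j) (by rwa [hcw, hcw])
  calc t * k * δ = k * (t * δ) := by ring
    _ ≤ k * (2 * ∑ i, f (w i)) := Nat.mul_le_mul_left k hclass
    _ = 2 * (k * ∑ i, f (w i)) := by ring
    _ ≤ 2 * ∑ v, f v := Nat.mul_le_mul_left 2 hw

theorem stmt12 {V : Type*} [Fintype V] [DecidableEq V] (G : SimpleGraph V) [DecidableRel G.Adj]
    {t k : ℕ} (ht : 2 ≤ t) (c : V → Fin t)
    (hsize : ∀ i : Fin t, k ≤ ((Finset.univ : Finset V).filter fun v => c v = i).card)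
    (heq : Equilibrium (Usharp G) c) :
    t * k * G.minDegree ≤ 2 * ∑ v, Usharp G c v :=
  mul_mul_le_two_mul_sum_of_le_add ht c (Usharp G c) hsize fun _ _ h =>
    minDegree_le_Usharp_add_Usharp_of_equilibrium G heq h
end

section
/- Let t ≥ 3, let C_{tk} be the cycle on tk vertices (tk ≥ 3), and let c be a coloring with t types where each color class has size exactly k. If c is an equilibrium under the variety-seeking utility U_τ, then the number of monochromatic edges of c is at most 3k/2 (i.e., 2·mono(c) ≤ 3k); equivalently, the number of colorful edges satisfies 2·ce(c) ≥ 2tk − 3k. -/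
open SimpleGraph Finset

/-!
In an equilibrium no swap of two agents of different types is improving. On the cycle this gives:
(1) all *interior* agents (both neighbours of their own type) share one type `a`;
(2) two agents that each see their own type and one foreign type, neither foreign type being the
other agent's type, have the same type (swapping them raises both utilities from 1 to 2).

Count monochromatic edges `s(i, i + 1)` by the type of `i`. A type without interior agents has
runs of length at most 2, hence at most `k / 2` monochromatic edges.

Without interior agents, at most three types carry a monochromatic edge: pick one such edge per
type; by (2), for any two of these types the chosen edge of one of them is preceded by the other
type, and a relation of out-degree at most 1 on `m` points covers at most `2m` of the `m (m - 1)`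
ordered pairs.

With an interior agent, let `u` end a run of `a` of length at least 2 and be followed by type
`x ≠ a`. Type `x` has at most `k / 2` monochromatic edges; by (2) applied to `u`, every
monochromatic edge of any other type `≠ a` is preceded by the last agent of a run of `a`, and the
monochromatic edges of type `a` together with these run ends number at most `k`.
-/

section General

variable {V : Type*} {t : ℕ} {c : V → Fin t} {u v : V}

theorem not_adj_of_notMem_typesIn [Fintype V] {G : SimpleGraph V} [DecidableRel G.Adj]
    (h : c v ∉ typesIn G c u) : ¬G.Adj u v :=
  fun huv => h (mem_image_of_mem c ((G.mem_neighborFinset u v).mpr huv))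

variable [DecidableEq V]

@[simp]
theorem swapColoring_apply_left : swapColoring c u v u = c v := by
  simp [swapColoring]

@[simp]
theorem swapColoring_apply_right : swapColoring c u v v = c u := by
  by_cases h : v = u <;> simp [swapColoring, h]

variable [Fintype V] {G : SimpleGraph V} [DecidableRel G.Adj]

theorem typesIn_swapColoring_right (h : ¬G.Adj u v) :
    typesIn G (swapColoring c u v) v = typesIn G c v := by
  refine image_congr fun w hw => ?_
  have hw : G.Adj v w := (G.mem_neighborFinset v w).mp hw
  have hwu : w ≠ u := fun hwu => h (hwu ▸ hw.symm)
  simp [swapColoring, hw.ne', hwu]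

theorem typesIn_swapColoring_left (h : ¬G.Adj u v) :
    typesIn G (swapColoring c u v) u = typesIn G c u := by
  refine image_congr fun w hw => ?_
  have hw : G.Adj u w := (G.mem_neighborFinset u w).mp hw
  have hwv : w ≠ v := fun hwv => h (hwv ▸ hw)
  simp [swapColoring, hw.ne', hwv]

/-- After the swap each agent sees all of the other's neighbour types and none of them is its own,
so both utilities rise from `#T - 1` to `#T` when the two counts `#T` agree. -/
theorem Equilibrium.card_typesIn_ne (heq : Equilibrium (Utau G) c) (hne : c u ≠ c v)
    (hu : c u ∈ typesIn G c u) (hv : c v ∈ typesIn G c v)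
    (huv : c u ∉ typesIn G c v) (hvu : c v ∉ typesIn G c u) :
    #(typesIn G c u) ≠ #(typesIn G c v) := by
  intro hcard
  have hadj := not_adj_of_notMem_typesIn hvu
  have hu_pos := card_pos.mpr ⟨_, hu⟩
  refine heq u v hne ⟨?_, ?_⟩
  · simp only [Utau, typesIn_swapColoring_right hadj, swapColoring_apply_right,
      card_erase_of_mem hu, erase_eq_of_notMem huv]
    omega
  · simp only [Utau, typesIn_swapColoring_left (G := G) hadj, swapColoring_apply_left,
      card_erase_of_mem hv, erase_eq_of_notMem hvu]
    omega

theorem Equilibrium.eq_of_typesIn_eq_singleton (heq : Equilibrium (Utau G) c)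
    (hu : typesIn G c u = {c u}) (hv : typesIn G c v = {c v}) : c u = c v := by
  by_contra hne
  exact heq.card_typesIn_ne hne (by simp [hu]) (by simp [hv]) (by simp [hv, hne])
    (by simp [hu, Ne.symm hne]) (by simp [hu, hv])

theorem Equilibrium.eq_of_typesIn_eq_pair (heq : Equilibrium (Utau G) c) {p q : Fin t}
    (hu : typesIn G c u = {c u, p}) (hv : typesIn G c v = {c v, q})
    (hpu : p ≠ c u) (hpv : p ≠ c v) (hqu : q ≠ c u) (hqv : q ≠ c v) : c u = c v := by
  by_contra hne
  exact heq.card_typesIn_ne hne (by simp [hu]) (by simp [hv]) (by simp [hv, hne, hqu.symm])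
    (by simp [hu, Ne.symm hne, hpv.symm])
    (by rw [hu, hv, card_pair hpu.symm, card_pair hqv.symm])

end General

theorem Finset.card_le_three_of_forall_ne {α : Type*} [DecidableEq α] (C : Finset α)
    (s : α → α) (h : ∀ y ∈ C, ∀ z ∈ C, y ≠ z → s y = z ∨ s z = y) : #C ≤ 3 := by
  have hsub : C.offDiag ⊆ C.image (fun y => (y, s y)) ∪ C.image (fun z => (s z, z)) := by
    rintro ⟨y, z⟩ hyz
    obtain ⟨hy, hz, hne⟩ := mem_offDiag.mp hyz
    rcases h y hy z hz hne with rfl | rfl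
    · exact mem_union_left _ (mem_image_of_mem _ hy)
    · exact mem_union_right _ (mem_image_of_mem _ hz)
  have := (card_le_card hsub).trans (card_union_le _ _)
  rw [offDiag_card] at this
  have h1 := card_image_le (s := C) (f := fun y => (y, s y))
  have h2 := card_image_le (s := C) (f := fun z => (s z, z))
  have : #C * #C ≤ 3 * #C := by omega
  nlinarith

theorem ZMod.natCast_ne_zero_of_lt {n m : ℕ} (h0 : m ≠ 0) (h : m < n) : (m : ZMod n) ≠ 0 :=
  fun h' => h0 (by simpa [h'] using (ZMod.val_natCast_of_lt h).symm)

theorem ZMod.exists_and_not_add_one {n : ℕ} [NeZero n] {P : ZMod n → Prop} {a b : ZMod n}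
    (ha : P a) (hb : ¬P b) : ∃ u, P u ∧ ¬P (u + 1) := by
  by_contra! h
  have hP : ∀ m : ℕ, P (a + m) := by
    intro m
    induction m with
    | zero => simpa using ha
    | succ m ih => simpa [add_assoc] using h _ ih
  exact hb (by simpa using hP (b - a).val)

section Cycle

variable {n t : ℕ}

theorem cycleZMod_adj {u v : ZMod n} :
    (cycleZMod n).Adj u v ↔ u ≠ v ∧ (u - v = 1 ∨ v - u = 1) := by
  simp [cycleZMod]

theorem injective_sym2_add_one (hn : 3 ≤ n) :
    Function.Injective fun i : ZMod n => s(i, i + 1) := by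
  have h2 : (2 : ZMod n) ≠ 0 := by
    exact_mod_cast ZMod.natCast_ne_zero_of_lt two_ne_zero (by omega)
  intro i j hij
  rcases Sym2.eq_iff.mp hij with ⟨h, -⟩ | ⟨h, h'⟩
  · exact h
  · exact absurd (by linear_combination h' - h) h2

variable [NeZero n] {c : ZMod n → Fin t}

theorem neighborFinset_cycleZMod (hn : 3 ≤ n) (v : ZMod n) :
    (cycleZMod n).neighborFinset v = {v - 1, v + 1} := by
  have h1 : (1 : ZMod n) ≠ 0 := by
    exact_mod_cast ZMod.natCast_ne_zero_of_lt one_ne_zero (by omega)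
  ext w
  simp only [mem_neighborFinset, cycleZMod_adj, mem_insert, mem_singleton]
  constructor
  · rintro ⟨-, h | h⟩
    · left; rw [← h]; ring
    · right; rw [← h]; ring
  · rintro (rfl | rfl)
    · exact ⟨fun h => h1 (by linear_combination h), Or.inl (by ring)⟩
    · exact ⟨fun h => h1 (by linear_combination -h), Or.inr (by ring)⟩

theorem typesIn_cycleZMod (hn : 3 ≤ n) (c : ZMod n → Fin t) (v : ZMod n) :
    typesIn (cycleZMod n) c v = {c (v - 1), c (v + 1)} := by
  rw [typesIn, neighborFinset_cycleZMod hn, image_insert, image_singleton]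

theorem edgeFinset_cycleZMod (hn : 3 ≤ n) :
    (cycleZMod n).edgeFinset = univ.image fun i => s(i, i + 1) := by
  have h1 : (1 : ZMod n) ≠ 0 := by
    exact_mod_cast ZMod.natCast_ne_zero_of_lt one_ne_zero (by omega)
  ext e
  induction e with
  | _ u v =>
    simp only [mem_edgeFinset, mem_edgeSet, cycleZMod_adj, mem_image, mem_univ,
      true_and, Sym2.eq_iff]
    constructor
    · rintro ⟨-, h | h⟩
      · exact ⟨v, Or.inr ⟨rfl, by rw [← h]; ring⟩⟩
      · exact ⟨u, Or.inl ⟨rfl, by rw [← h]; ring⟩⟩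
    · rintro ⟨i, ⟨rfl, rfl⟩ | ⟨rfl, rfl⟩⟩
      · exact ⟨fun h => h1 (by linear_combination -h), Or.inr (by ring)⟩
      · exact ⟨fun h => h1 (by linear_combination h), Or.inl (by ring)⟩

theorem card_edgeFinset_cycleZMod (hn : 3 ≤ n) : #(cycleZMod n).edgeFinset = n := by
  rw [edgeFinset_cycleZMod hn, card_image_of_injective _ (injective_sym2_add_one hn),
    card_univ, ZMod.card]

def monoStarts (c : ZMod n → Fin t) : Finset (ZMod n) :=
  {i | c (i + 1) = c i}

theorem monoCount_cycleZMod (hn : 3 ≤ n) (c : ZMod n → Fin t) :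
    monoCount (cycleZMod n) c = #(monoStarts c) := by
  rw [monoCount, edgeFinset_cycleZMod hn, filter_image,
    card_image_of_injective _ (injective_sym2_add_one hn), monoStarts]
  simp [eq_comm]

end Cycle

theorem monoCount_add_ceCount {V : Type*} [Fintype V] [DecidableEq V] (G : SimpleGraph V)
    [DecidableRel G.Adj] {t : ℕ} (c : V → Fin t) :
    monoCount G c + ceCount G c = #G.edgeFinset :=
  card_filter_add_card_filter_not _

section Equilibrium

variable {n t : ℕ} [NeZero n] {c : ZMod n → Fin t}

theorem card_filter_monoStarts_add_card_filter (a : Fin t) :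
    #{i ∈ monoStarts c | c i = a} + #{i | c i = a ∧ c (i + 1) ≠ a} = #{i | c i = a} := by
  rw [← card_filter_add_card_filter_not (s := {i | c i = a})
    (p := fun i => c (i + 1) = a)]
  congr 2 <;> ext i <;> grind [monoStarts]

def IsInterior (c : ZMod n → Fin t) (v : ZMod n) : Prop :=
  c (v - 1) = c v ∧ c (v + 1) = c v

theorem two_mul_card_filter_monoStarts_le {y : Fin t}
    (hy : ∀ v, c v = y → ¬IsInterior c v) :
    2 * #{i ∈ monoStarts c | c i = y} ≤ #{i | c i = y} := by
  set M := {i ∈ monoStarts c | c i = y}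
  have hM : ∀ i ∈ M, c i = y ∧ c (i + 1) = y := fun i hi => by
    simp only [M, monoStarts, mem_filter, mem_univ, true_and] at hi
    exact ⟨hi.2, hi.1.trans hi.2⟩
  have hdisj : Disjoint M (M.image (· + 1)) := by
    refine disjoint_left.mpr fun i hi hi' => ?_
    obtain ⟨j, hj, rfl⟩ := mem_image.mp hi'
    obtain ⟨hj0, hj1⟩ := hM j hj
    exact hy (j + 1) hj1 ⟨by rw [add_sub_cancel_right, hj0, hj1], by rw [(hM _ hi).2, hj1]⟩
  have hsub : M ∪ M.image (· + 1) ⊆ ({i | c i = y} : Finset _) := by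
    intro i hi
    rcases mem_union.mp hi with hi | hi
    · simpa using (hM i hi).1
    · obtain ⟨j, hj, rfl⟩ := mem_image.mp hi
      simpa using (hM j hj).2
  have := card_le_card hsub
  rw [card_union_of_disjoint hdisj,
    card_image_of_injective _ (add_left_injective 1)] at this
  omega

theorem Equilibrium.eq_of_isInterior (hn : 3 ≤ n) (heq : Equilibrium (Utau (cycleZMod n)) c)
    {u v : ZMod n} (hu : IsInterior c u) (hv : IsInterior c v) : c u = c v :=
  heq.eq_of_typesIn_eq_singleton (by simp [typesIn_cycleZMod hn, hu.1, hu.2])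
    (by simp [typesIn_cycleZMod hn, hv.1, hv.2])

theorem Equilibrium.pred_eq_or_pred_eq (hn : 3 ≤ n) (heq : Equilibrium (Utau (cycleZMod n)) c)
    {i j : ZMod n} (hi : i ∈ monoStarts c) (hj : j ∈ monoStarts c)
    (hi' : ¬IsInterior c i) (hj' : ¬IsInterior c j) (hne : c i ≠ c j) :
    c (i - 1) = c j ∨ c (j - 1) = c i := by
  simp only [monoStarts, mem_filter, mem_univ, true_and] at hi hj
  by_contra! h
  exact hne <| heq.eq_of_typesIn_eq_pair
    (by rw [typesIn_cycleZMod hn, hi, pair_comm])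
    (by rw [typesIn_cycleZMod hn, hj, pair_comm])
    (fun h' => hi' ⟨h', hi⟩) h.1 h.2 (fun h' => hj' ⟨h', hj⟩)

theorem Equilibrium.card_image_monoStarts_le (hn : 3 ≤ n)
    (heq : Equilibrium (Utau (cycleZMod n)) c) (h : ∀ v, ¬IsInterior c v) :
    #((monoStarts c).image c) ≤ 3 := by
  have : ∀ y ∈ (monoStarts c).image c, ∃ i ∈ monoStarts c, c i = y :=
    fun y hy => mem_image.mp hy
  choose! r hrM hrc using this
  refine card_le_three_of_forall_ne _ (fun y => c (r y - 1)) fun y hy z hz hyz => ?_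
  have := heq.pred_eq_or_pred_eq hn (hrM y hy) (hrM z hz) (h _) (h _)
    (by rwa [hrc y hy, hrc z hz])
  rwa [hrc y hy, hrc z hz] at this

theorem Equilibrium.two_mul_card_monoStarts_le_of_forall_not_isInterior (hn : 3 ≤ n)
    (heq : Equilibrium (Utau (cycleZMod n)) c) {k : ℕ}
    (hsize : ∀ y, #{i | c i = y} ≤ k) (h : ∀ v, ¬IsInterior c v) :
    2 * #(monoStarts c) ≤ 3 * k :=
  calc 2 * #(monoStarts c)
      = ∑ y ∈ (monoStarts c).image c, 2 * #{i ∈ monoStarts c | c i = y} := by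
        rw [card_eq_sum_card_image c, mul_sum]
    _ ≤ ∑ y ∈ (monoStarts c).image c, k :=
        sum_le_sum fun y _ =>
          (two_mul_card_filter_monoStarts_le fun v _ => h v).trans (hsize y)
    _ = #((monoStarts c).image c) * k := by rw [sum_const, smul_eq_mul]
    _ ≤ 3 * k := Nat.mul_le_mul_right k (heq.card_image_monoStarts_le hn h)

theorem Equilibrium.two_mul_card_monoStarts_le_of_isInterior (hn : 3 ≤ n)
    (heq : Equilibrium (Utau (cycleZMod n)) c) {k : ℕ}
    (hsize : ∀ y, #{i | c i = y} ≤ k) {v₀ : ZMod n}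
    (hv₀ : IsInterior c v₀) : 2 * #(monoStarts c) ≤ 3 * k := by
  have hint : ∀ v, IsInterior c v → c v = c v₀ :=
    fun v hv => heq.eq_of_isInterior hn hv hv₀
  by_cases hall : ∀ v, c v = c v₀
  · have : #(monoStarts c) ≤ k := calc
      #(monoStarts c) ≤ #(univ : Finset (ZMod n)) := card_le_univ _
      _ = #{i | c i = c v₀} := by
        rw [filter_true_of_mem fun v _ => hall v]
      _ ≤ k := hsize _
    omega
  obtain ⟨w, hw⟩ := not_forall.mp hall
  obtain ⟨u, ⟨hu₀, hu₁⟩, hu₂⟩ := ZMod.exists_and_not_add_one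
    (P := fun v => c (v - 1) = c v₀ ∧ c v = c v₀) ⟨hv₀.1, rfl⟩ (fun h => hw h.2)
  have hx : c (u + 1) ≠ c v₀ := fun h => hu₂ ⟨by rwa [add_sub_cancel_right], h⟩
  have hprev :
      ∀ i ∈ monoStarts c, c i ≠ c v₀ → c i ≠ c (u + 1) → c (i - 1) = c v₀ := by
    intro i hi hia hix
    simp only [monoStarts, mem_filter, mem_univ, true_and] at hi
    by_contra h
    refine hia (hu₁ ▸ heq.eq_of_typesIn_eq_pair (q := c (u + 1))
      (by rw [typesIn_cycleZMod hn, hi, pair_comm])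
      (by rw [typesIn_cycleZMod hn, hu₀, hu₁]) (fun h' => hia (hint i ⟨h', hi⟩))
      (by rwa [hu₁]) (Ne.symm hix) (by rwa [hu₁]))
  have hcover : #(monoStarts c) ≤ #{i ∈ monoStarts c | c i = c v₀}
      + #{i ∈ monoStarts c | c i = c (u + 1)}
      + #{i ∈ monoStarts c | c i ≠ c v₀ ∧ c i ≠ c (u + 1)} := by
    refine (card_le_card fun i hi => ?_).trans ((card_union_le _ _).trans
      (Nat.add_le_add_right (card_union_le _ _) _))
    simp only [mem_union, mem_filter, hi, true_and]
    tauto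
  have hthird : #{i ∈ monoStarts c | c i ≠ c v₀ ∧ c i ≠ c (u + 1)}
      ≤ #{i | c i = c v₀ ∧ c (i + 1) ≠ c v₀} := by
    refine card_le_card_of_injOn (· - 1) (fun i hi => ?_) (sub_left_injective.injOn)
    simp only [mem_coe, mem_filter, mem_univ, true_and] at hi ⊢
    exact ⟨hprev i hi.1 hi.2.1 hi.2.2, by rw [sub_add_cancel]; exact hi.2.1⟩
  have hsecond := (two_mul_card_filter_monoStarts_le (y := c (u + 1))
    fun v hv hvi => hx (hv ▸ hint v hvi)).trans (hsize _)
  have hfirst := card_filter_monoStarts_add_card_filter (c := c) (c v₀)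
  have := hsize (c v₀)
  omega

theorem Equilibrium.two_mul_card_monoStarts_le (hn : 3 ≤ n)
    (heq : Equilibrium (Utau (cycleZMod n)) c) {k : ℕ}
    (hsize : ∀ y, #{i | c i = y} ≤ k) :
    2 * #(monoStarts c) ≤ 3 * k := by
  by_cases h : ∃ v, IsInterior c v
  · obtain ⟨v, hv⟩ := h
    exact heq.two_mul_card_monoStarts_le_of_isInterior hn hsize hv
  · exact heq.two_mul_card_monoStarts_le_of_forall_not_isInterior hn hsize (not_exists.mp h)

end Equilibrium

theorem stmt15_general (t k : ℕ) (hn : 3 ≤ t * k) [NeZero (t * k)]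
    (c : ZMod (t * k) → Fin t)
    (hsize : ∀ i : Fin t, ((Finset.univ : Finset (ZMod (t * k))).filter fun v => c v = i).card = k)
    (heq : Equilibrium (Utau (cycleZMod (t * k))) c) :
    2 * monoCount (cycleZMod (t * k)) c ≤ 3 * k ∧
      2 * t * k ≤ 2 * ceCount (cycleZMod (t * k)) c + 3 * k := by
  have hmono : 2 * monoCount (cycleZMod (t * k)) c ≤ 3 * k := by
    rw [monoCount_cycleZMod hn]
    exact heq.two_mul_card_monoStarts_le hn fun y => (hsize y).le
  have hedges := monoCount_add_ceCount (cycleZMod (t * k)) c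
  rw [card_edgeFinset_cycleZMod hn] at hedges
  refine ⟨hmono, ?_⟩
  rw [mul_assoc]
  omega

theorem stmt15 (t k : ℕ) (ht : 3 ≤ t) (hn : 3 ≤ t * k) [NeZero (t * k)]
    (c : ZMod (t * k) → Fin t)
    (hsize : ∀ i : Fin t, ((Finset.univ : Finset (ZMod (t * k))).filter fun v => c v = i).card = k)
    (heq : Equilibrium (Utau (cycleZMod (t * k))) c) :
    2 * monoCount (cycleZMod (t * k)) c ≤ 3 * k ∧
      2 * t * k ≤ 2 * ceCount (cycleZMod (t * k)) c + 3 * k :=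
  stmt15_general t k hn c hsize heq
end
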